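/- arXiv:2110.11234 — 4 statements merged into one kernel-verified Lean document; each statement's English description precedes it below -/
import Mathlib

section
/- Let Λ_TU = {(F(x), Λ_x, v(x))}_{x∈X} and Γ_TU = {(G(x), Γ_x, w(x))}_{x∈X} be continuous (T,U)-controlled g-fusion Bessel families for H with bounds B and D respectively. Assume each operator T* P_{F(x)} Λ_x* Λ_x P_{F(x)} U and T* P_{G(x)} Γ_x* Γ_x P_{G(x)} U is a positive operator on H, and that the reconstruction identity ⟨f, g⟩ = ∫_X v(x) w(x) ⟨(T* P_{F(x)} Λ_x* Λ_x P_{F(x)} U)^{1/2} f, (T* P_{G(x)} Γ_x* Γ_x P_{G(x)} U)^{1/2} g⟩ dμ(x) holds for all f, g ∈ H (i.e. the composition of the synthesis operator of Γ_TU with the analysis operator of Λ_TU is the identity). Then Λ_TU is a continuous (T,U)-controlled g-fusion frame for H with bounds 1/D and B, and Γ_TU is a continuous (T,U)-controlled g-fusion frame for H with bounds 1/B and D. -/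
open MeasureTheory ContinuousLinearMap
open scoped ComplexOrder

/-- The orthogonal projection onto a closed subspace, as an operator `H →L[ℂ] H`. -/
noncomputable def ctrlProj {H : Type*} [NormedAddCommGroup H] [InnerProductSpace ℂ H]
    (F : Submodule ℂ H) [Submodule.HasOrthogonalProjection F] : H →L[ℂ] H :=
  F.subtypeL.comp (Submodule.orthogonalProjectionOnto F)

/-- The operator `T* P_F Λ* Λ P_F U : H →L[ℂ] H`. -/
noncomputable def ctrlOp {H : Type*} [NormedAddCommGroup H] [InnerProductSpace ℂ H]
    [CompleteSpace H] {K₀ : Type*} [NormedAddCommGroup K₀] [InnerProductSpace ℂ K₀]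
    [CompleteSpace K₀] (F : Submodule ℂ H) [Submodule.HasOrthogonalProjection F]
    (Λ : H →L[ℂ] K₀) (T U : H →L[ℂ] H) : H →L[ℂ] H :=
  (adjoint T).comp ((ctrlProj F).comp ((adjoint Λ).comp (Λ.comp ((ctrlProj F).comp U))))

lemma ctrl_key {H : Type*} [NormedAddCommGroup H] [InnerProductSpace ℂ H] [CompleteSpace H]
    {K₀ : Type*} [NormedAddCommGroup K₀] [InnerProductSpace ℂ K₀] [CompleteSpace K₀]
    (F : Submodule ℂ H) [Submodule.HasOrthogonalProjection F] (Λ : H →L[ℂ] K₀) (T U S : H →L[ℂ] H)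
    (hS1 : S.IsPositive) (hS2 : S.comp S = ctrlOp F Λ T U) (f : H) :
    (inner ℂ (Λ ((ctrlProj F) (U f))) (Λ ((ctrlProj F) (T f))) : ℂ) = ((‖S f‖^2 : ℝ) : ℂ) := by
  have hP : ctrlProj F = adjoint (ctrlProj F) := by
    rw [eq_adjoint_iff]
    intro x y
    simp only [ctrlProj, comp_apply, Submodule.subtypeL_apply]
    exact Submodule.inner_starProjection_left_eq_right (K := F) x y
  have hSsa : adjoint S = S := hS1.isSelfAdjoint
  have h1 : (inner ℂ ((ctrlOp F Λ T U) f) f : ℂ)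
      = inner ℂ (Λ ((ctrlProj F) (U f))) (Λ ((ctrlProj F) (T f))) := by
    simp only [ctrlOp, comp_apply, adjoint_inner_left]
    nth_rewrite 1 [hP]
    rw [adjoint_inner_left, adjoint_inner_left]
  rw [← h1, ← hS2]
  have h2 : (inner ℂ ((S.comp S) f) f : ℂ) = inner ℂ (S f) (S f) := by
    rw [comp_apply, ← hSsa, adjoint_inner_left, hSsa]
  rw [h2, inner_self_eq_norm_sq_to_K]
  norm_cast

lemma ctrl_aux {X : Type*} [MeasurableSpace X] (μ : Measure X) (r a b : X → ℝ) (C : ℝ)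
    (hC : 0 < C) (ha : Integrable a μ) (hb : Integrable b μ) (hr : Integrable r μ)
    (ha0 : ∀ x, 0 ≤ a x) (hb0 : ∀ x, 0 ≤ b x)
    (hab : ∀ x, r x ≤ Real.sqrt (a x) * Real.sqrt (b x)) :
    2 * C * ∫ x, r x ∂μ ≤ C^2 * ∫ x, a x ∂μ + ∫ x, b x ∂μ := by
  have key : ∀ x, 2 * C * r x ≤ C^2 * a x + b x := by
    intro x
    nlinarith [sq_nonneg (C * Real.sqrt (a x) - Real.sqrt (b x)),
      Real.sq_sqrt (ha0 x), Real.sq_sqrt (hb0 x), hab x, hC,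
      Real.sqrt_nonneg (a x), Real.sqrt_nonneg (b x)]
  calc 2 * C * ∫ x, r x ∂μ = ∫ x, 2 * C * r x ∂μ := (integral_const_mul _ _).symm
    _ ≤ ∫ x, (C^2 * a x + b x) ∂μ :=
        integral_mono (hr.const_mul _) ((ha.const_mul _).add hb) key
    _ = C^2 * ∫ x, a x ∂μ + ∫ x, b x ∂μ := by
        rw [integral_add (ha.const_mul _) hb, integral_const_mul]

/-- If `Λ_TU` and `Γ_TU` are continuous `(T,U)`-controlled `g`-fusion Bessel
families with bounds `B` and `D`, the associated operators are positive (with positive square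
roots `sΛ x`, `sΓ x`), and the reconstruction identity
`⟨f, g⟩ = ∫ v(x) w(x) ⟨sΛ x f, sΓ x g⟩ dμ` holds, then both families are continuous
`(T,U)`-controlled `g`-fusion frames, with bounds `1/D, B` and `1/B, D` respectively. -/
theorem stmt2
    {H : Type*} [NormedAddCommGroup H] [InnerProductSpace ℂ H] [CompleteSpace H]
    {X : Type*} [MeasurableSpace X] (μ : Measure X)
    {K : X → Type*} [∀ x, NormedAddCommGroup (K x)] [∀ x, InnerProductSpace ℂ (K x)]
    [∀ x, CompleteSpace (K x)]
    (F G : X → Submodule ℂ H) [∀ x, Submodule.HasOrthogonalProjection (F x)]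
    [∀ x, Submodule.HasOrthogonalProjection (G x)]
    (Λ Γ : ∀ x, H →L[ℂ] K x) (v w : X → ℝ) (T U : H →L[ℂ] H)
    (hv : Measurable v) (hvpos : ∀ x, 0 < v x)
    (hw : Measurable w) (hwpos : ∀ x, 0 < w x)
    (hT : T.IsPositive) (hU : U.IsPositive) (hTinv : IsUnit T) (hUinv : IsUnit U)
    (hFmeas : ∀ f g : H, Measurable fun x => (inner ℂ ((ctrlProj (F x)) f) g : ℂ))
    (hGmeas : ∀ f g : H, Measurable fun x => (inner ℂ ((ctrlProj (G x)) f) g : ℂ))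
    (B D : ℝ) (hB : 0 < B) (hD : 0 < D)
    -- Λ_TU is a continuous (T,U)-controlled g-fusion Bessel family with bound B
    (hΛint : ∀ f : H, Integrable (fun x => ((v x : ℂ))^2 *
      (inner ℂ (Λ x ((ctrlProj (F x)) (U f))) (Λ x ((ctrlProj (F x)) (T f))) : ℂ)) μ)
    (hΛBessel : ∀ f : H,
      (∫ x, ((v x : ℂ))^2 *
        (inner ℂ (Λ x ((ctrlProj (F x)) (U f))) (Λ x ((ctrlProj (F x)) (T f))) : ℂ) ∂μ)
        ≤ ((B * ‖f‖^2 : ℝ) : ℂ))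
    -- Γ_TU is a continuous (T,U)-controlled g-fusion Bessel family with bound D
    (hΓint : ∀ f : H, Integrable (fun x => ((w x : ℂ))^2 *
      (inner ℂ (Γ x ((ctrlProj (G x)) (U f))) (Γ x ((ctrlProj (G x)) (T f))) : ℂ)) μ)
    (hΓBessel : ∀ f : H,
      (∫ x, ((w x : ℂ))^2 *
        (inner ℂ (Γ x ((ctrlProj (G x)) (U f))) (Γ x ((ctrlProj (G x)) (T f))) : ℂ) ∂μ)
        ≤ ((D * ‖f‖^2 : ℝ) : ℂ))
    -- positivity of the associated operators, with positive square roots sΛ, sΓ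
    (hΛpos : ∀ x, (ctrlOp (F x) (Λ x) T U).IsPositive)
    (hΓpos : ∀ x, (ctrlOp (G x) (Γ x) T U).IsPositive)
    (sΛ sΓ : X → H →L[ℂ] H)
    (hsΛ : ∀ x, (sΛ x).IsPositive ∧ (sΛ x).comp (sΛ x) = ctrlOp (F x) (Λ x) T U)
    (hsΓ : ∀ x, (sΓ x).IsPositive ∧ (sΓ x).comp (sΓ x) = ctrlOp (G x) (Γ x) T U)
    -- the reconstruction identity: T_{C'} ∘ T_C* = I_H
    (hrecint : ∀ f g : H, Integrable (fun x =>
      ((v x : ℂ)) * ((w x : ℂ)) * (inner ℂ (sΛ x f) (sΓ x g) : ℂ)) μ)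
    (hrec : ∀ f g : H, (inner ℂ f g : ℂ) =
      ∫ x, ((v x : ℂ)) * ((w x : ℂ)) * (inner ℂ (sΛ x f) (sΓ x g) : ℂ) ∂μ) :
    (∀ f : H, (((1 / D) * ‖f‖^2 : ℝ) : ℂ) ≤
        ∫ x, ((v x : ℂ))^2 *
          (inner ℂ (Λ x ((ctrlProj (F x)) (U f))) (Λ x ((ctrlProj (F x)) (T f))) : ℂ) ∂μ ∧
      (∫ x, ((v x : ℂ))^2 *
          (inner ℂ (Λ x ((ctrlProj (F x)) (U f))) (Λ x ((ctrlProj (F x)) (T f))) : ℂ) ∂μ)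
        ≤ ((B * ‖f‖^2 : ℝ) : ℂ)) ∧
    (∀ f : H, (((1 / B) * ‖f‖^2 : ℝ) : ℂ) ≤
        ∫ x, ((w x : ℂ))^2 *
          (inner ℂ (Γ x ((ctrlProj (G x)) (U f))) (Γ x ((ctrlProj (G x)) (T f))) : ℂ) ∂μ ∧
      (∫ x, ((w x : ℂ))^2 *
          (inner ℂ (Γ x ((ctrlProj (G x)) (U f))) (Γ x ((ctrlProj (G x)) (T f))) : ℂ) ∂μ)
        ≤ ((D * ‖f‖^2 : ℝ) : ℂ)) := by
  classical
  -- real-valued integrands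
  set a : H → X → ℝ := fun f x => (v x)^2 * ‖sΛ x f‖^2 with ha_def
  set b : H → X → ℝ := fun f x => (w x)^2 * ‖sΓ x f‖^2 with hb_def
  have eqΛ : ∀ (f : H) (x : X), ((v x : ℂ))^2 *
      (inner ℂ (Λ x ((ctrlProj (F x)) (U f))) (Λ x ((ctrlProj (F x)) (T f))) : ℂ)
      = ((a f x : ℝ) : ℂ) := by
    intro f x
    rw [ctrl_key (F x) (Λ x) T U (sΛ x) (hsΛ x).1 (hsΛ x).2 f]
    simp only [ha_def]
    push_cast
    ring
  have eqΓ : ∀ (f : H) (x : X), ((w x : ℂ))^2 *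
      (inner ℂ (Γ x ((ctrlProj (G x)) (U f))) (Γ x ((ctrlProj (G x)) (T f))) : ℂ)
      = ((b f x : ℝ) : ℂ) := by
    intro f x
    rw [ctrl_key (G x) (Γ x) T U (sΓ x) (hsΓ x).1 (hsΓ x).2 f]
    simp only [hb_def]
    push_cast
    ring
  have haint : ∀ f : H, Integrable (a f) μ := by
    intro f
    have h : Integrable (fun x => ((a f x : ℝ) : ℂ)) μ :=
      (hΛint f).congr (Filter.Eventually.of_forall (eqΛ f))
    simpa using h.re
  have hbint : ∀ f : H, Integrable (b f) μ := by
    intro f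
    have h : Integrable (fun x => ((b f x : ℝ) : ℂ)) μ :=
      (hΓint f).congr (Filter.Eventually.of_forall (eqΓ f))
    simpa using h.re
  have intΛeq : ∀ f : H, (∫ x, ((v x : ℂ))^2 *
      (inner ℂ (Λ x ((ctrlProj (F x)) (U f))) (Λ x ((ctrlProj (F x)) (T f))) : ℂ) ∂μ)
      = ((∫ x, a f x ∂μ : ℝ) : ℂ) := by
    intro f
    rw [integral_congr_ae (Filter.Eventually.of_forall (eqΛ f))]
    exact integral_ofReal
  have intΓeq : ∀ f : H, (∫ x, ((w x : ℂ))^2 *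
      (inner ℂ (Γ x ((ctrlProj (G x)) (U f))) (Γ x ((ctrlProj (G x)) (T f))) : ℂ) ∂μ)
      = ((∫ x, b f x ∂μ : ℝ) : ℂ) := by
    intro f
    rw [integral_congr_ae (Filter.Eventually.of_forall (eqΓ f))]
    exact integral_ofReal
  have hIΛle : ∀ f : H, ∫ x, a f x ∂μ ≤ B * ‖f‖^2 := by
    intro f
    have h := hΛBessel f
    rw [intΛeq f] at h
    exact Complex.real_le_real.mp h
  have hIΓle : ∀ f : H, ∫ x, b f x ∂μ ≤ D * ‖f‖^2 := by
    intro f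
    have h := hΓBessel f
    rw [intΓeq f] at h
    exact Complex.real_le_real.mp h
  have ha0 : ∀ (f : H) (x : X), 0 ≤ a f x := fun f x => by positivity
  have hb0 : ∀ (f : H) (x : X), 0 ≤ b f x := fun f x => by positivity
  -- the real part of the reconstruction integrand
  set r : H → X → ℝ := fun f x =>
    v x * w x * ((inner ℂ (sΛ x f) (sΓ x f) : ℂ)).re with hr_def
  have hrint : ∀ f : H, Integrable (r f) μ := by
    intro f
    simpa using (hrecint f f).re
  have hnormeq : ∀ f : H, ‖f‖^2 = ∫ x, r f x ∂μ := by
    intro f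
    have h2 : ((inner ℂ f f : ℂ)).re = ‖f‖^2 := by
      rw [inner_self_eq_norm_sq_to_K]
      norm_cast
    have h3 : (∫ x, r f x ∂μ)
        = ((∫ x, ((v x : ℂ)) * ((w x : ℂ)) * (inner ℂ (sΛ x f) (sΓ x f) : ℂ) ∂μ)).re := by
      simpa using integral_re (hrecint f f)
    rw [h3, ← hrec f f, h2]
  have hrle : ∀ (f : H) (x : X),
      r f x ≤ Real.sqrt (a f x) * Real.sqrt (b f x) := by
    intro f x
    have hs1 : Real.sqrt (a f x) = v x * ‖sΛ x f‖ := by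
      rw [show a f x = (v x * ‖sΛ x f‖)^2 by simp only [ha_def]; ring,
        Real.sqrt_sq (mul_nonneg (hvpos x).le (norm_nonneg _))]
    have hs2 : Real.sqrt (b f x) = w x * ‖sΓ x f‖ := by
      rw [show b f x = (w x * ‖sΓ x f‖)^2 by simp only [hb_def]; ring,
        Real.sqrt_sq (mul_nonneg (hwpos x).le (norm_nonneg _))]
    have h1 : ((inner ℂ (sΛ x f) (sΓ x f) : ℂ)).re
        ≤ ‖(inner ℂ (sΛ x f) (sΓ x f) : ℂ)‖ := Complex.re_le_norm _
    have h3 : ‖(inner ℂ (sΛ x f) (sΓ x f) : ℂ)‖ ≤ ‖sΛ x f‖ * ‖sΓ x f‖ := by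
      exact norm_inner_le_norm _ _
    rw [hs1, hs2]
    calc r f x = v x * w x * ((inner ℂ (sΛ x f) (sΓ x f) : ℂ)).re := by rw [hr_def]
      _ ≤ v x * w x * (‖sΛ x f‖ * ‖sΓ x f‖) :=
          mul_le_mul_of_nonneg_left (h1.trans h3)
            (mul_nonneg (hvpos x).le (hwpos x).le)
      _ = v x * ‖sΛ x f‖ * (w x * ‖sΓ x f‖) := by ring
  refine ⟨fun f => ⟨?_, hΛBessel f⟩, fun f => ⟨?_, hΓBessel f⟩⟩
  · rw [intΛeq f]
    rw [Complex.real_le_real]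
    have haux := ctrl_aux μ (r f) (a f) (b f) D hD (haint f) (hbint f) (hrint f)
      (ha0 f) (hb0 f) (hrle f)
    rw [← hnormeq f] at haux
    have h4 : D * ‖f‖^2 ≤ D^2 * ∫ x, a f x ∂μ := by nlinarith [hIΓle f]
    rw [one_div, inv_mul_le_iff₀ hD]
    nlinarith [h4, hD]
  · rw [intΓeq f]
    rw [Complex.real_le_real]
    have hrle' : ∀ x, r f x ≤ Real.sqrt (b f x) * Real.sqrt (a f x) := by
      intro x; rw [mul_comm]; exact hrle f x
    have haux := ctrl_aux μ (r f) (b f) (a f) B hB (hbint f) (haint f) (hrint f)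
      (hb0 f) (ha0 f) hrle'
    rw [← hnormeq f] at haux
    have h4 : B * ‖f‖^2 ≤ B^2 * ∫ x, b f x ∂μ := by nlinarith [hIΛle f]
    rw [one_div, inv_mul_le_iff₀ hB]
    nlinarith [h4, hB]
end

section
/- Let Λ_TT and Γ_UU be continuous (T,T)-controlled and (U,U)-controlled g-fusion Bessel families for H with bounds B and D respectively, and let m ∈ L^∞(X, μ). Then there exists a unique bounded linear operator M_{m,ΛT,ΓU} : H → H such that ⟨M_{m,ΛT,ΓU} f, g⟩ = ∫_X m(x) v(x) w(x) ⟨T P_{F(x)} Λ_x* Γ_x P_{G(x)} U f, g⟩ dμ(x) for all f, g ∈ H, and ‖M_{m,ΛT,ΓU}‖ ≤ ‖m‖_∞ √(B D). -/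
open MeasureTheory ContinuousLinearMap
open scoped ComplexOrder

set_option maxHeartbeats 1000000

section Aux

variable {H : Type*} [NormedAddCommGroup H] [InnerProductSpace ℂ H] [CompleteSpace H]
variable {X : Type*} [MeasurableSpace X] {μ : Measure X}

lemma memL2_of_sq_integrable {a : X → ℝ} (ha : ∀ x, 0 ≤ a x)
    (h : Integrable (fun x => (a x) ^ 2) μ) : MemLp a 2 μ := by
  have heq : a = fun x => Real.sqrt ((a x) ^ 2) := by
    funext x; rw [Real.sqrt_sq (ha x)]
  have hsm : AEStronglyMeasurable a μ := by
    rw [heq]; exact Real.continuous_sqrt.comp_aestronglyMeasurable h.1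
  exact (memLp_two_iff_integrable_sq hsm).2 h

lemma cs_integral {a b : X → ℝ} (ha : ∀ x, 0 ≤ a x) (hb : ∀ x, 0 ≤ b x)
    (hA : Integrable (fun x => (a x) ^ 2) μ) (hB : Integrable (fun x => (b x) ^ 2) μ) :
    ∫ x, a x * b x ∂μ ≤ Real.sqrt (∫ x, (a x) ^ 2 ∂μ) * Real.sqrt (∫ x, (b x) ^ 2 ∂μ) := by
  have hpq : Real.HolderConjugate 2 2 := Real.HolderConjugate.two_two
  have hA2 : MemLp a (ENNReal.ofReal 2) μ := by
    simpa [ENNReal.ofReal_ofNat] using memL2_of_sq_integrable ha hA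
  have hB2 : MemLp b (ENNReal.ofReal 2) μ := by
    simpa [ENNReal.ofReal_ofNat] using memL2_of_sq_integrable hb hB
  have := integral_mul_le_Lp_mul_Lq_of_nonneg hpq
    (Filter.Eventually.of_forall ha) (Filter.Eventually.of_forall hb) hA2 hB2
  calc ∫ x, a x * b x ∂μ ≤ (∫ x, a x ^ (2:ℝ) ∂μ) ^ ((1:ℝ)/2) * (∫ x, b x ^ (2:ℝ) ∂μ) ^ ((1:ℝ)/2) := this
    _ = Real.sqrt (∫ x, (a x) ^ 2 ∂μ) * Real.sqrt (∫ x, (b x) ^ 2 ∂μ) := by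
        rw [Real.sqrt_eq_rpow, Real.sqrt_eq_rpow]
        norm_num [show ((2:ℝ)) = ((2:ℕ):ℝ) by norm_num, Real.rpow_natCast]

lemma mul_integrable_of_L2 {a b : X → ℝ} (ha : MemLp a 2 μ) (hb : MemLp b 2 μ) :
    Integrable (fun x => a x * b x) μ := by
  have := hb.smul (r := 1) ha (hpqr := ⟨by simp [ENNReal.inv_two_add_inv_two]⟩)
  rw [memLp_one_iff_integrable] at this
  exact this

end Aux

/-- If `Λ_TT` and `Γ_UU` are continuous `(T,T)`- and `(U,U)`-controlled
`g`-fusion Bessel families for `H` with bounds `B` and `D` and `m ∈ L^∞(X, μ)`, then there is a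
unique bounded operator `M_{m,ΛT,ΓU}` with
`⟨M f, g⟩ = ∫ m(x) v(x) w(x) ⟨T P_{F x} Λₓ* Γₓ P_{G x} U f, g⟩ dμ`, and
`‖M_{m,ΛT,ΓU}‖ ≤ ‖m‖_∞ √(B D)`. -/
theorem stmt15
    {H : Type*} [NormedAddCommGroup H] [InnerProductSpace ℂ H] [CompleteSpace H]
    {X : Type*} [MeasurableSpace X] (μ : Measure X)
    {K : X → Type*} [∀ x, NormedAddCommGroup (K x)] [∀ x, InnerProductSpace ℂ (K x)]
    [∀ x, CompleteSpace (K x)]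
    (F G : X → Submodule ℂ H) [∀ x, Submodule.HasOrthogonalProjection (F x)]
    [∀ x, Submodule.HasOrthogonalProjection (G x)]
    (Λ Γ : ∀ x, H →L[ℂ] K x) (v w : X → ℝ) (T U : H →L[ℂ] H)
    (hv : Measurable v) (hvpos : ∀ x, 0 < v x)
    (hw : Measurable w) (hwpos : ∀ x, 0 < w x)
    (hT : T.IsPositive) (hU : U.IsPositive) (hTinv : IsUnit T) (hUinv : IsUnit U)
    (hFmeas : ∀ f g : H, Measurable fun x => (inner ℂ ((ctrlProj (F x)) f) g : ℂ))
    (hGmeas : ∀ f g : H, Measurable fun x => (inner ℂ ((ctrlProj (G x)) f) g : ℂ))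
    (B D : ℝ) (hB : 0 < B) (hD : 0 < D)
    -- Λ_TT is a continuous (T,T)-controlled g-fusion Bessel family with bound B
    (hΛint : ∀ f : H,
      Integrable (fun x => (v x)^2 * ‖Λ x ((ctrlProj (F x)) (T f))‖^2) μ)
    (hΛBessel : ∀ f : H,
      (∫ x, (v x)^2 * ‖Λ x ((ctrlProj (F x)) (T f))‖^2 ∂μ) ≤ B * ‖f‖^2)
    -- Γ_UU is a continuous (U,U)-controlled g-fusion Bessel family with bound D
    (hΓint : ∀ f : H,
      Integrable (fun x => (w x)^2 * ‖Γ x ((ctrlProj (G x)) (U f))‖^2) μ)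
    (hΓBessel : ∀ f : H,
      (∫ x, (w x)^2 * ‖Γ x ((ctrlProj (G x)) (U f))‖^2 ∂μ) ≤ D * ‖f‖^2)
    -- m ∈ L^∞(X, μ)
    (m : X → ℂ) (hm : MemLp m ⊤ μ)
    -- integrability of the weak integrand of the multiplier
    (hint : ∀ f g : H, Integrable (fun x => m x * ((v x : ℂ)) * ((w x : ℂ)) *
      (inner ℂ (T ((ctrlProj (F x)) ((adjoint (Λ x))
        (Γ x ((ctrlProj (G x)) (U f)))))) g : ℂ)) μ) :
    ∃ M : H →L[ℂ] H,
      (∀ f g : H, (inner ℂ (M f) g : ℂ) = ∫ x, m x * ((v x : ℂ)) * ((w x : ℂ)) *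
        (inner ℂ (T ((ctrlProj (F x)) ((adjoint (Λ x))
          (Γ x ((ctrlProj (G x)) (U f)))))) g : ℂ) ∂μ) ∧
      ‖M‖ ≤ (eLpNorm m ⊤ μ).toReal * Real.sqrt (B * D) ∧
      (∀ M' : H →L[ℂ] H,
        (∀ f g : H, (inner ℂ (M' f) g : ℂ) = ∫ x, m x * ((v x : ℂ)) * ((w x : ℂ)) *
          (inner ℂ (T ((ctrlProj (F x)) ((adjoint (Λ x))
            (Γ x ((ctrlProj (G x)) (U f)))))) g : ℂ) ∂μ) → M' = M) := by
  classical
  set mC : ℝ := (eLpNorm m ⊤ μ).toReal with hmCdef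
  have hmC0 : 0 ≤ mC := ENNReal.toReal_nonneg
  set C : ℝ := mC * Real.sqrt (B * D) with hCdef
  have hC0 : 0 ≤ C := mul_nonneg hmC0 (Real.sqrt_nonneg _)
  set Φ : H → H → ℂ := fun f g => ∫ x, m x * ((v x : ℂ)) * ((w x : ℂ)) *
      (inner ℂ (T ((ctrlProj (F x)) ((adjoint (Λ x))
        (Γ x ((ctrlProj (G x)) (U f)))))) g : ℂ) ∂μ with hΦdef
  -- key inner product identity
  have key : ∀ (f g : H) (x : X),
      (inner ℂ (T ((ctrlProj (F x)) ((adjoint (Λ x))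
        (Γ x ((ctrlProj (G x)) (U f)))))) g : ℂ)
      = (inner ℂ (Γ x ((ctrlProj (G x)) (U f))) (Λ x ((ctrlProj (F x)) (T g))) : ℂ) := by
    intro f g x
    have hTadj : ContinuousLinearMap.adjoint T = T := hT.isSelfAdjoint.adjoint_eq
    calc (inner ℂ (T ((ctrlProj (F x)) ((adjoint (Λ x))
            (Γ x ((ctrlProj (G x)) (U f)))))) g : ℂ)
        = inner ℂ ((ctrlProj (F x)) ((adjoint (Λ x)) (Γ x ((ctrlProj (G x)) (U f))))) (T g) := by
          conv_lhs => rw [← hTadj, adjoint_inner_left]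
      _ = inner ℂ ((adjoint (Λ x)) (Γ x ((ctrlProj (G x)) (U f)))) ((ctrlProj (F x)) (T g)) :=
          Submodule.inner_starProjection_left_eq_right (F x) _ _
      _ = inner ℂ (Γ x ((ctrlProj (G x)) (U f))) (Λ x ((ctrlProj (F x)) (T g))) :=
          adjoint_inner_left _ _ _
  -- a.e. bound on m
  have hmae : ∀ᵐ x ∂μ, ‖m x‖ ≤ mC := by
    have h1 : ∀ᵐ x ∂μ, (‖m x‖₊ : ENNReal) ≤ eLpNorm m ⊤ μ := by
      rw [eLpNorm_exponent_top]; exact ae_le_eLpNormEssSup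
    filter_upwards [h1] with x hx
    have := ENNReal.toReal_mono hm.2.ne hx
    rw [hmCdef]; simpa using this
  -- the L² data
  have hΛmem : ∀ g : H, MemLp (fun x => v x * ‖Λ x ((ctrlProj (F x)) (T g))‖) 2 μ := by
    intro g
    refine memL2_of_sq_integrable (fun x => mul_nonneg (hvpos x).le (norm_nonneg _)) ?_
    simpa [mul_pow] using hΛint g
  have hΓmem : ∀ f : H, MemLp (fun x => w x * ‖Γ x ((ctrlProj (G x)) (U f))‖) 2 μ := by
    intro f
    refine memL2_of_sq_integrable (fun x => mul_nonneg (hwpos x).le (norm_nonneg _)) ?_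
    simpa [mul_pow] using hΓint f
  -- main norm bound for the form
  have hmain : ∀ f g : H, ‖Φ f g‖ ≤ C * ‖f‖ * ‖g‖ := by
    intro f g
    set a : X → ℝ := fun x => w x * ‖Γ x ((ctrlProj (G x)) (U f))‖ with hadef
    set b : X → ℝ := fun x => v x * ‖Λ x ((ctrlProj (F x)) (T g))‖ with hbdef
    have hab : Integrable (fun x => a x * b x) μ := mul_integrable_of_L2 (hΓmem f) (hΛmem g)
    have hae : ∀ᵐ x ∂μ, ‖m x * ((v x : ℂ)) * ((w x : ℂ)) *
        (inner ℂ (T ((ctrlProj (F x)) ((adjoint (Λ x))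
          (Γ x ((ctrlProj (G x)) (U f)))))) g : ℂ)‖ ≤ mC * (a x * b x) := by
      filter_upwards [hmae] with x hx
      rw [key f g x]
      have h2 : ‖(inner ℂ (Γ x ((ctrlProj (G x)) (U f))) (Λ x ((ctrlProj (F x)) (T g))) : ℂ)‖
          ≤ ‖Γ x ((ctrlProj (G x)) (U f))‖ * ‖Λ x ((ctrlProj (F x)) (T g))‖ :=
        norm_inner_le_norm _ _
      have hvx := (hvpos x).le
      have hwx := (hwpos x).le
      calc ‖m x * ((v x : ℂ)) * ((w x : ℂ)) *
            (inner ℂ (Γ x ((ctrlProj (G x)) (U f))) (Λ x ((ctrlProj (F x)) (T g))) : ℂ)‖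
          = ‖m x‖ * (v x * (w x *
            ‖(inner ℂ (Γ x ((ctrlProj (G x)) (U f))) (Λ x ((ctrlProj (F x)) (T g))) : ℂ)‖)) := by
            simp [norm_mul, Complex.norm_real, abs_of_nonneg hvx, abs_of_nonneg hwx]; ring
        _ ≤ mC * (v x * (w x * (‖Γ x ((ctrlProj (G x)) (U f))‖ * ‖Λ x ((ctrlProj (F x)) (T g))‖))) := by
            gcongr
        _ = mC * (a x * b x) := by rw [hadef, hbdef]; ring
    have h1 : ‖Φ f g‖ ≤ ∫ x, ‖m x * ((v x : ℂ)) * ((w x : ℂ)) *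
        (inner ℂ (T ((ctrlProj (F x)) ((adjoint (Λ x))
          (Γ x ((ctrlProj (G x)) (U f)))))) g : ℂ)‖ ∂μ :=
      norm_integral_le_integral_norm _
    have h2 : (∫ x, ‖m x * ((v x : ℂ)) * ((w x : ℂ)) *
        (inner ℂ (T ((ctrlProj (F x)) ((adjoint (Λ x))
          (Γ x ((ctrlProj (G x)) (U f)))))) g : ℂ)‖ ∂μ) ≤ ∫ x, mC * (a x * b x) ∂μ :=
      integral_mono_ae (hint f g).norm (hab.const_mul mC) hae
    have h3 : (∫ x, mC * (a x * b x) ∂μ) = mC * ∫ x, a x * b x ∂μ := integral_const_mul mC _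
    have h4 : (∫ x, a x * b x ∂μ) ≤ Real.sqrt (∫ x, (a x)^2 ∂μ) * Real.sqrt (∫ x, (b x)^2 ∂μ) := by
      refine cs_integral (fun x => mul_nonneg (hwpos x).le (norm_nonneg _))
        (fun x => mul_nonneg (hvpos x).le (norm_nonneg _)) ?_ ?_
      · simpa [hadef, mul_pow] using hΓint f
      · simpa [hbdef, mul_pow] using hΛint g
    have h5 : Real.sqrt (∫ x, (a x)^2 ∂μ) ≤ Real.sqrt D * ‖f‖ := by
      rw [← Real.sqrt_sq (norm_nonneg f), ← Real.sqrt_mul hD.le]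
      refine Real.sqrt_le_sqrt ?_
      simpa [hadef, mul_pow] using hΓBessel f
    have h6 : Real.sqrt (∫ x, (b x)^2 ∂μ) ≤ Real.sqrt B * ‖g‖ := by
      rw [← Real.sqrt_sq (norm_nonneg g), ← Real.sqrt_mul hB.le]
      refine Real.sqrt_le_sqrt ?_
      simpa [hbdef, mul_pow] using hΛBessel g
    have h7 : (∫ x, a x * b x ∂μ) ≤ (Real.sqrt D * ‖f‖) * (Real.sqrt B * ‖g‖) := by
      refine h4.trans (mul_le_mul h5 h6 (Real.sqrt_nonneg _) (by positivity))
    calc ‖Φ f g‖ ≤ mC * ∫ x, a x * b x ∂μ := by rw [← h3]; exact h1.trans h2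
      _ ≤ mC * ((Real.sqrt D * ‖f‖) * (Real.sqrt B * ‖g‖)) := by
          exact mul_le_mul_of_nonneg_left h7 hmC0
      _ = C * ‖f‖ * ‖g‖ := by
          rw [hCdef, Real.sqrt_mul hB.le]; ring
  -- sesquilinearity
  have hadd1 : ∀ f f' g : H, Φ (f + f') g = Φ f g + Φ f' g := by
    intro f f' g
    simp only [hΦdef]
    simp only [map_add, inner_add_left, mul_add]
    exact integral_add (hint f g) (hint f' g)
  have hsmul1 : ∀ (c : ℂ) (f g : H), Φ (c • f) g = (starRingEnd ℂ) c * Φ f g := by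
    intro c f g
    simp only [hΦdef]
    rw [← integral_const_mul]
    congr 1; funext x
    simp only [_root_.map_smul, inner_smul_left]
    ring
  have hadd2 : ∀ f g g' : H, Φ f (g + g') = Φ f g + Φ f g' := by
    intro f g g'
    simp only [hΦdef]
    simp only [inner_add_right, mul_add]
    exact integral_add (hint f g) (hint f g')
  have hsmul2 : ∀ (c : ℂ) (f g : H), Φ f (c • g) = c * Φ f g := by
    intro c f g
    simp only [hΦdef]
    rw [← integral_const_mul]
    congr 1; funext x
    rw [inner_smul_right]
    ring
  let bil : H →ₛₗ[starRingEnd ℂ] H →ₗ[ℂ] ℂ :=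
    LinearMap.mk₂'ₛₗ (starRingEnd ℂ) (RingHom.id ℂ) Φ hadd1 hsmul1 hadd2 hsmul2
  let Bc : H →L⋆[ℂ] H →L[ℂ] ℂ := LinearMap.mkContinuous₂ bil C hmain
  set M : H →L[ℂ] H := InnerProductSpace.continuousLinearMapOfBilin Bc with hMdef
  have hMspec : ∀ f g : H, (inner ℂ (M f) g : ℂ) = Φ f g := fun f g =>
    InnerProductSpace.continuousLinearMapOfBilin_apply Bc f g
  refine ⟨M, fun f g => hMspec f g, ?_, ?_⟩
  · refine opNorm_le_bound M hC0 fun f => ?_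
    rcases eq_or_ne (M f) 0 with h | h
    · rw [h, norm_zero]; positivity
    · have hpos : 0 < ‖M f‖ := norm_pos_iff.2 h
      have h1 : ‖M f‖ ^ 2 = ‖(inner ℂ (M f) (M f) : ℂ)‖ := by
        rw [inner_self_eq_norm_sq_to_K]
        simp [norm_pow]
      have h2 : ‖(inner ℂ (M f) (M f) : ℂ)‖ ≤ C * ‖f‖ * ‖M f‖ := by
        rw [hMspec f (M f)]; exact hmain f (M f)
      nlinarith
  · intro M' hM'
    ext f
    refine ext_inner_right ℂ fun g => ?_
    rw [hM' f g, hMspec f g]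
end

section
/- Let Λ_TT and Γ_UU be continuous (T,T)-controlled and (U,U)-controlled g-fusion Bessel families for H with bounds B and D respectively, and let m ∈ L^∞(X, μ) be real-valued. Let M_{m,ΛT,ΓU} and M_{m,ΓU,ΛT} be the bounded multiplier operators determined by ⟨M_{m,ΛT,ΓU} f, g⟩ = ∫_X m(x) v(x) w(x) ⟨T P_{F(x)} Λ_x* Γ_x P_{G(x)} U f, g⟩ dμ(x) and ⟨M_{m,ΓU,ΛT} f, g⟩ = ∫_X m(x) v(x) w(x) ⟨U P_{G(x)} Γ_x* Λ_x P_{F(x)} T f, g⟩ dμ(x) for all f, g ∈ H. Then (M_{m,ΛT,ΓU})* = M_{m,ΓU,ΛT}. -/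
open MeasureTheory ContinuousLinearMap
open scoped ComplexOrder

/-- For a real-valued `m ∈ L^∞(X, μ)` and continuous `(T,T)`- and
`(U,U)`-controlled `g`-fusion Bessel families `Λ_TT`, `Γ_UU`, the multiplier operators satisfy
`(M_{m,ΛT,ΓU})* = M_{m,ΓU,ΛT}`. -/
theorem stmt16
    {H : Type*} [NormedAddCommGroup H] [InnerProductSpace ℂ H] [CompleteSpace H]
    {X : Type*} [MeasurableSpace X] (μ : Measure X)
    {K : X → Type*} [∀ x, NormedAddCommGroup (K x)] [∀ x, InnerProductSpace ℂ (K x)]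
    [∀ x, CompleteSpace (K x)]
    (F G : X → Submodule ℂ H) [∀ x, Submodule.HasOrthogonalProjection (F x)]
    [∀ x, Submodule.HasOrthogonalProjection (G x)]
    (Λ Γ : ∀ x, H →L[ℂ] K x) (v w : X → ℝ) (T U : H →L[ℂ] H)
    (hv : Measurable v) (hvpos : ∀ x, 0 < v x)
    (hw : Measurable w) (hwpos : ∀ x, 0 < w x)
    (hT : T.IsPositive) (hU : U.IsPositive) (hTinv : IsUnit T) (hUinv : IsUnit U)
    (hFmeas : ∀ f g : H, Measurable fun x => (inner ℂ ((ctrlProj (F x)) f) g : ℂ))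
    (hGmeas : ∀ f g : H, Measurable fun x => (inner ℂ ((ctrlProj (G x)) f) g : ℂ))
    (B D : ℝ) (hB : 0 < B) (hD : 0 < D)
    -- Λ_TT is a continuous (T,T)-controlled g-fusion Bessel family with bound B
    (hΛint : ∀ f : H,
      Integrable (fun x => (v x)^2 * ‖Λ x ((ctrlProj (F x)) (T f))‖^2) μ)
    (hΛBessel : ∀ f : H,
      (∫ x, (v x)^2 * ‖Λ x ((ctrlProj (F x)) (T f))‖^2 ∂μ) ≤ B * ‖f‖^2)
    -- Γ_UU is a continuous (U,U)-controlled g-fusion Bessel family with bound D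
    (hΓint : ∀ f : H,
      Integrable (fun x => (w x)^2 * ‖Γ x ((ctrlProj (G x)) (U f))‖^2) μ)
    (hΓBessel : ∀ f : H,
      (∫ x, (w x)^2 * ‖Γ x ((ctrlProj (G x)) (U f))‖^2 ∂μ) ≤ D * ‖f‖^2)
    -- m is a real-valued element of L^∞(X, μ)
    (m : X → ℝ) (hm : MemLp m ⊤ μ)
    -- the multiplier operators M₁ = M_{m,ΛT,ΓU} and M₂ = M_{m,ΓU,ΛT}
    (M₁ M₂ : H →L[ℂ] H)
    (hint₁ : ∀ f g : H, Integrable (fun x => ((m x : ℂ)) * ((v x : ℂ)) * ((w x : ℂ)) *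
      (inner ℂ (T ((ctrlProj (F x)) ((adjoint (Λ x))
        (Γ x ((ctrlProj (G x)) (U f)))))) g : ℂ)) μ)
    (hM₁ : ∀ f g : H, (inner ℂ (M₁ f) g : ℂ) = ∫ x, ((m x : ℂ)) * ((v x : ℂ)) * ((w x : ℂ)) *
      (inner ℂ (T ((ctrlProj (F x)) ((adjoint (Λ x))
        (Γ x ((ctrlProj (G x)) (U f)))))) g : ℂ) ∂μ)
    (hint₂ : ∀ f g : H, Integrable (fun x => ((m x : ℂ)) * ((v x : ℂ)) * ((w x : ℂ)) *
      (inner ℂ (U ((ctrlProj (G x)) ((adjoint (Γ x))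
        (Λ x ((ctrlProj (F x)) (T f)))))) g : ℂ)) μ)
    (hM₂ : ∀ f g : H, (inner ℂ (M₂ f) g : ℂ) = ∫ x, ((m x : ℂ)) * ((v x : ℂ)) * ((w x : ℂ)) *
      (inner ℂ (U ((ctrlProj (G x)) ((adjoint (Γ x))
        (Λ x ((ctrlProj (F x)) (T f)))))) g : ℂ) ∂μ) :
    adjoint M₁ = M₂ := by
  have hPF : ∀ x, adjoint (ctrlProj (F x)) = ctrlProj (F x) := fun x =>
    ((eq_adjoint_iff _ _).2 fun a b => Submodule.inner_starProjection_left_eq_right (F x) a b).symm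
  have hPG : ∀ x, adjoint (ctrlProj (G x)) = ctrlProj (G x) := fun x =>
    ((eq_adjoint_iff _ _).2 fun a b => Submodule.inner_starProjection_left_eq_right (G x) a b).symm
  have key : ∀ (x : X) (f g : H),
      (inner ℂ f (T ((ctrlProj (F x)) ((adjoint (Λ x)) (Γ x ((ctrlProj (G x)) (U g)))))) : ℂ)
      = inner ℂ (U ((ctrlProj (G x)) ((adjoint (Γ x)) (Λ x ((ctrlProj (F x)) (T f)))))) g := by
    intro x f g
    rw [show T ((ctrlProj (F x)) ((adjoint (Λ x)) (Γ x ((ctrlProj (G x)) (U g))))) =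
        ((T ∘L ctrlProj (F x)) ∘L (adjoint (Λ x) ∘L (Γ x ∘L (ctrlProj (G x) ∘L U)))) g from rfl,
      ← adjoint_inner_left]
    simp only [adjoint_comp, adjoint_adjoint, hPF x, hPG x, hT.isSelfAdjoint.adjoint_eq, hU.isSelfAdjoint.adjoint_eq,
      comp_apply]
  ext f
  apply ext_inner_right ℂ
  intro g
  rw [adjoint_inner_left, ← inner_conj_symm f (M₁ g), hM₁ g f, hM₂ f g, ← integral_conj]
  congr 1
  funext x
  rw [map_mul, map_mul, map_mul, Complex.conj_ofReal, Complex.conj_ofReal,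
    Complex.conj_ofReal, inner_conj_symm, key x f g]
end

section
/- Let Λ_TU = {(F(x), Λ_x, v(x))}_{x∈X} be a continuous (T,U)-controlled g-fusion frame for H with bounds A, B, let G, Γ_x give a second weakly measurable family Γ_TU = {(G(x), Γ_x, v(x))}_{x∈X} (same weight v), and suppose v² is integrable over X. Suppose there exists a constant D with 0 < D ∫_X v(x)² dμ(x) < A such that for every x ∈ X and f ∈ H: 0 ≤ ⟨T*(P_{G(x)} Γ_x* Γ_x P_{G(x)} − P_{F(x)} Λ_x* Λ_x P_{F(x)}) U f, f⟩ ≤ D‖f‖². Then Γ_TU is a continuous (T,U)-controlled g-fusion frame for H with lower bound A − D ∫_X v(x)² dμ(x) and upper bound B + D ∫_X v(x)² dμ(x). -/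
open MeasureTheory ContinuousLinearMap
open scoped ComplexOrder

private lemma stmt19_ctrl_inner_eq {H : Type*} [NormedAddCommGroup H] [InnerProductSpace ℂ H]
    [CompleteSpace H]
    {K : Type*} [NormedAddCommGroup K] [InnerProductSpace ℂ K] [CompleteSpace K]
    (Fx : Submodule ℂ H) [Submodule.HasOrthogonalProjection Fx] (Γ : H →L[ℂ] K) (T : H →L[ℂ] H)
    (u f : H) :
    (inner ℂ (Γ ((ctrlProj Fx) u)) (Γ ((ctrlProj Fx) (T f))) : ℂ)
      = inner ℂ ((adjoint T) ((ctrlProj Fx) ((adjoint Γ) (Γ ((ctrlProj Fx) u))))) f := by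
  rw [adjoint_inner_left]
  simp only [show ctrlProj Fx = Fx.starProjection from rfl]
  rw [Submodule.inner_starProjection_left_eq_right, ← adjoint_inner_left]

/-- (Perturbation.)  Let `Λ_TU` be a continuous `(T,U)`-controlled `g`-fusion
frame for `H` with bounds `A, B`, let `Γ_TU` be a second family with the same weight `v`, and
suppose `D` satisfies `0 < D ∫ v² dμ < A` and, for all `x, f`,
`0 ≤ ⟨T*(P_{G x} Γₓ* Γₓ P_{G x} − P_{F x} Λₓ* Λₓ P_{F x}) U f, f⟩ ≤ D‖f‖²`.
Then `Γ_TU` is a continuous `(T,U)`-controlled `g`-fusion frame for `H` with bounds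
`A − D ∫ v² dμ` and `B + D ∫ v² dμ`. -/
theorem stmt19
    {H : Type*} [NormedAddCommGroup H] [InnerProductSpace ℂ H] [CompleteSpace H]
    {X : Type*} [MeasurableSpace X] (μ : Measure X)
    {K : X → Type*} [∀ x, NormedAddCommGroup (K x)] [∀ x, InnerProductSpace ℂ (K x)]
    [∀ x, CompleteSpace (K x)]
    (F G : X → Submodule ℂ H) [∀ x, Submodule.HasOrthogonalProjection (F x)]
    [∀ x, Submodule.HasOrthogonalProjection (G x)]
    (Λ Γ : ∀ x, H →L[ℂ] K x) (v : X → ℝ) (T U : H →L[ℂ] H)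
    (hv : Measurable v) (hvpos : ∀ x, 0 < v x)
    (hT : T.IsPositive) (hU : U.IsPositive) (hTinv : IsUnit T) (hUinv : IsUnit U)
    (hFmeas : ∀ f g : H, Measurable fun x => (inner ℂ ((ctrlProj (F x)) f) g : ℂ))
    (hGmeas : ∀ f g : H, Measurable fun x => (inner ℂ ((ctrlProj (G x)) f) g : ℂ))
    (hv2 : Integrable (fun x => (v x)^2) μ)
    (A B : ℝ) (hA : 0 < A) (hAB : A ≤ B)
    -- Λ_TU is a continuous (T,U)-controlled g-fusion frame with bounds A, B
    (hΛint : ∀ f : H, Integrable (fun x => ((v x : ℂ))^2 *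
      (inner ℂ (Λ x ((ctrlProj (F x)) (U f))) (Λ x ((ctrlProj (F x)) (T f))) : ℂ)) μ)
    (hΛframe : ∀ f : H,
      ((A * ‖f‖^2 : ℝ) : ℂ) ≤
        (∫ x, ((v x : ℂ))^2 *
          (inner ℂ (Λ x ((ctrlProj (F x)) (U f))) (Λ x ((ctrlProj (F x)) (T f))) : ℂ) ∂μ) ∧
      (∫ x, ((v x : ℂ))^2 *
          (inner ℂ (Λ x ((ctrlProj (F x)) (U f))) (Λ x ((ctrlProj (F x)) (T f))) : ℂ) ∂μ)
        ≤ ((B * ‖f‖^2 : ℝ) : ℂ))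
    -- the Γ-integrand is integrable
    (hΓint : ∀ f : H, Integrable (fun x => ((v x : ℂ))^2 *
      (inner ℂ (Γ x ((ctrlProj (G x)) (U f))) (Γ x ((ctrlProj (G x)) (T f))) : ℂ)) μ)
    -- the perturbation constant
    (D : ℝ) (hD : 0 < D * ∫ x, (v x)^2 ∂μ) (hDA : D * (∫ x, (v x)^2 ∂μ) < A)
    -- the pointwise perturbation condition
    (hpert : ∀ (x : X) (f : H),
      (0 : ℂ) ≤ (inner ℂ ((adjoint T)
          ((ctrlProj (G x)) ((adjoint (Γ x)) (Γ x ((ctrlProj (G x)) (U f)))) -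
           (ctrlProj (F x)) ((adjoint (Λ x)) (Λ x ((ctrlProj (F x)) (U f)))))) f : ℂ) ∧
      (inner ℂ ((adjoint T)
          ((ctrlProj (G x)) ((adjoint (Γ x)) (Γ x ((ctrlProj (G x)) (U f)))) -
           (ctrlProj (F x)) ((adjoint (Λ x)) (Λ x ((ctrlProj (F x)) (U f)))))) f : ℂ)
        ≤ ((D * ‖f‖^2 : ℝ) : ℂ)) :
    ∀ f : H,
      (((A - D * ∫ x, (v x)^2 ∂μ) * ‖f‖^2 : ℝ) : ℂ) ≤
        (∫ x, ((v x : ℂ))^2 *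
          (inner ℂ (Γ x ((ctrlProj (G x)) (U f))) (Γ x ((ctrlProj (G x)) (T f))) : ℂ) ∂μ) ∧
      (∫ x, ((v x : ℂ))^2 *
          (inner ℂ (Γ x ((ctrlProj (G x)) (U f))) (Γ x ((ctrlProj (G x)) (T f))) : ℂ) ∂μ)
        ≤ (((B + D * ∫ x, (v x)^2 ∂μ) * ‖f‖^2 : ℝ) : ℂ) := by
  intro f
  set IΛ := ∫ x, ((v x : ℂ))^2 *
      (inner ℂ (Λ x ((ctrlProj (F x)) (U f))) (Λ x ((ctrlProj (F x)) (T f))) : ℂ) ∂μ with hIΛ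
  set IΓ := ∫ x, ((v x : ℂ))^2 *
      (inner ℂ (Γ x ((ctrlProj (G x)) (U f))) (Γ x ((ctrlProj (G x)) (T f))) : ℂ) ∂μ with hIΓ
  set c : X → ℂ := fun x => (inner ℂ ((adjoint T)
          ((ctrlProj (G x)) ((adjoint (Γ x)) (Γ x ((ctrlProj (G x)) (U f)))) -
           (ctrlProj (F x)) ((adjoint (Λ x)) (Λ x ((ctrlProj (F x)) (U f)))))) f : ℂ) with hc
  have him : ∀ x, (c x).im = 0 ∧ 0 ≤ (c x).re ∧ (c x).re ≤ D * ‖f‖^2 := by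
    intro x
    have h1 : (0:ℂ) ≤ c x := (hpert x f).1
    have h2 : c x ≤ ((D * ‖f‖^2 : ℝ) : ℂ) := (hpert x f).2
    rw [Complex.le_def] at h1 h2
    refine ⟨by simpa using h1.2.symm, by simpa using h1.1, ?_⟩
    simpa [← Complex.ofReal_pow] using h2.1
  set g : X → ℝ := fun x => (v x)^2 * (c x).re with hg
  have hkey : ∀ x, ((v x : ℂ))^2 *
      (inner ℂ (Γ x ((ctrlProj (G x)) (U f))) (Γ x ((ctrlProj (G x)) (T f))) : ℂ) -
      ((v x : ℂ))^2 *
      (inner ℂ (Λ x ((ctrlProj (F x)) (U f))) (Λ x ((ctrlProj (F x)) (T f))) : ℂ)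
      = ((g x : ℝ) : ℂ) := by
    intro x
    have e1 := stmt19_ctrl_inner_eq (G x) (Γ x) T (U f) f
    have e2 := stmt19_ctrl_inner_eq (F x) (Λ x) T (U f) f
    have ec : c x = ((c x).re : ℂ) := Complex.ext rfl (by simp [(him x).1])
    have hsub : c x = (inner ℂ ((adjoint T)
          ((ctrlProj (G x)) ((adjoint (Γ x)) (Γ x ((ctrlProj (G x)) (U f)))))) f : ℂ)
        - (inner ℂ ((adjoint T)
          ((ctrlProj (F x)) ((adjoint (Λ x)) (Λ x ((ctrlProj (F x)) (U f)))))) f : ℂ) := by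
      simp only [hc]
      rw [map_sub, inner_sub_left]
    rw [e1, e2, ← mul_sub, ← hsub, ec, hg]
    push_cast
    ring
  have hdiffInt : Integrable (fun x => ((g x : ℝ) : ℂ)) μ := by
    refine ((hΓint f).sub (hΛint f)).congr (Filter.Eventually.of_forall fun x => ?_)
    exact (hkey x)
  have hgInt : Integrable g μ := by simpa using hdiffInt.re
  have hint_eq : IΓ = IΛ + ((∫ x, g x ∂μ : ℝ) : ℂ) := by
    have h1 : IΓ - IΛ = ∫ x, ((g x : ℝ) : ℂ) ∂μ := by
      rw [hIΓ, hIΛ, ← integral_sub (hΓint f) (hΛint f)]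
      exact integral_congr_ae (Filter.Eventually.of_forall fun x => hkey x)
    have h2 : (∫ x, ((g x : ℝ) : ℂ) ∂μ) = ((∫ x, g x ∂μ : ℝ) : ℂ) := integral_ofReal
    rw [h2] at h1
    linear_combination h1
  have hr0 : 0 ≤ ∫ x, g x ∂μ :=
    integral_nonneg fun x => mul_nonneg (sq_nonneg _) (him x).2.1
  have hr1 : ∫ x, g x ∂μ ≤ D * ‖f‖^2 * ∫ x, (v x)^2 ∂μ := by
    calc ∫ x, g x ∂μ ≤ ∫ x, (v x)^2 * (D * ‖f‖^2) ∂μ :=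
          integral_mono hgInt (hv2.mul_const _) fun x =>
            mul_le_mul_of_nonneg_left (him x).2.2 (sq_nonneg _)
      _ = D * ‖f‖^2 * ∫ x, (v x)^2 ∂μ := by rw [integral_mul_const]; ring
  obtain ⟨hl, hu⟩ := hΛframe f
  rw [← hIΛ] at hl hu
  rw [Complex.le_def] at hl hu
  have hlre : A * ‖f‖^2 ≤ IΛ.re := by simpa [← Complex.ofReal_pow] using hl.1
  have hure : IΛ.re ≤ B * ‖f‖^2 := by simpa [← Complex.ofReal_pow] using hu.1
  have hlim : IΛ.im = 0 := by simpa [← Complex.ofReal_pow] using hl.2.symm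
  have hfnn : (0:ℝ) ≤ ‖f‖^2 := sq_nonneg _
  constructor
  · rw [Complex.le_def, hint_eq]
    constructor
    · simp only [Complex.add_re, Complex.ofReal_re]
      nlinarith [hD.le]
    · simp only [Complex.add_im, Complex.ofReal_im, hlim]
      norm_num
  · rw [Complex.le_def, hint_eq]
    constructor
    · simp only [Complex.add_re, Complex.ofReal_re]
      nlinarith
    · simp only [Complex.add_im, Complex.ofReal_im, hlim]
      norm_num
end
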